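/- arXiv:1505.00237 — 3 statements merged into one kernel-verified Lean document; each statement's English description precedes it below -/
import Mathlib

section
/- The Casalbuoni bracket satisfies the graded Jacobi identity: for a p-form ω, q-form α, and r-form β, (−1)^{pr}{ω, {α, β}} + (−1)^{qp}{α, {β, ω}} + (−1)^{rq}{β, {ω, α}} = 0. -/
/-!
For homogeneous `ω`, `α` the graded commutator `[D_ω, D_α] - D_{ {ω, α} }` of the inner
derivations `D_ω = {ω, ·}` is again a graded derivation of the exterior algebra, so it vanishes
as soon as it vanishes on vectors. Graded antisymmetry of the bracket, which follows from the two
Leibniz rules by induction on the degree, identifies the Jacobiator with this defect up to sign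
and makes the Jacobiator cyclic; cycling a vector into the first slot three times reduces
everything to three vectors, where every double bracket vanishes because `{η, η'}` is a scalar.
-/

open scoped RealInnerProductSpace
open ExteriorAlgebra

/-- The degree-`p` component of the exterior algebra: the space of `p`-forms. -/
noncomputable def exteriorGrade (Φ : Type*) [AddCommGroup Φ] [Module ℝ Φ] (p : ℕ) :
    Submodule ℝ (ExteriorAlgebra ℝ Φ) :=
  LinearMap.range (ExteriorAlgebra.ι ℝ : Φ →ₗ[ℝ] ExteriorAlgebra ℝ Φ) ^ p

/-- The Casalbuoni bracket on the exterior algebra of a real inner product space: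
the bilinear bracket of degree `−2` with `{η, η'} = 2 g(η, η')` on vectors, extended
as a graded biderivation. -/
structure CasalbuoniBracket (Φ : Type*) [NormedAddCommGroup Φ] [InnerProductSpace ℝ Φ] where
  bracket : ExteriorAlgebra ℝ Φ →ₗ[ℝ] ExteriorAlgebra ℝ Φ →ₗ[ℝ] ExteriorAlgebra ℝ Φ
  bracket_ι_ι : ∀ η η' : Φ,
    bracket (ι ℝ η) (ι ℝ η') = algebraMap ℝ (ExteriorAlgebra ℝ Φ) (2 * ⟪η, η'⟫)
  bracket_grade : ∀ (p q : ℕ) (ω α : ExteriorAlgebra ℝ Φ),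
    ω ∈ exteriorGrade Φ p → α ∈ exteriorGrade Φ q →
    bracket ω α ∈ exteriorGrade Φ (p + q - 2)
  leibniz_right : ∀ (p q : ℕ) (ω α β : ExteriorAlgebra ℝ Φ),
    ω ∈ exteriorGrade Φ p → α ∈ exteriorGrade Φ q →
    bracket ω (α * β) = bracket ω α * β + ((-1 : ℝ) ^ (p * q)) • (α * bracket ω β)
  leibniz_left : ∀ (p q r : ℕ) (ω α β : ExteriorAlgebra ℝ Φ),
    ω ∈ exteriorGrade Φ p → α ∈ exteriorGrade Φ q → β ∈ exteriorGrade Φ r →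
    bracket (α * β) ω = ((-1 : ℝ) ^ (p * r)) • (bracket α ω * β) + α * bracket β ω


section

variable {Φ : Type*} [AddCommGroup Φ] [Module ℝ Φ]

lemma ι_mem_exteriorGrade_one (η : Φ) : ι ℝ η ∈ exteriorGrade Φ 1 := by
  rw [exteriorGrade, pow_one]
  exact ⟨η, rfl⟩

lemma algebraMap_mem_exteriorGrade_zero (c : ℝ) :
    algebraMap ℝ (ExteriorAlgebra ℝ Φ) c ∈ exteriorGrade Φ 0 := by
  rw [exteriorGrade, pow_zero]
  exact Submodule.mem_one.mpr ⟨c, rfl⟩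

lemma exists_algebraMap_eq_of_mem_exteriorGrade_zero {x : ExteriorAlgebra ℝ Φ}
    (hx : x ∈ exteriorGrade Φ 0) : ∃ c : ℝ, algebraMap ℝ (ExteriorAlgebra ℝ Φ) c = x := by
  rwa [exteriorGrade, pow_zero, Submodule.mem_one] at hx

end

namespace CasalbuoniBracket

variable {Φ : Type*} [NormedAddCommGroup Φ] [InnerProductSpace ℝ Φ] (cb : CasalbuoniBracket Φ)

lemma bracket_algebraMap_left {p : ℕ} {x : ExteriorAlgebra ℝ Φ} (hx : x ∈ exteriorGrade Φ p)
    (c : ℝ) : cb.bracket (algebraMap ℝ (ExteriorAlgebra ℝ Φ) c) x = 0 := by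
  have h1 := algebraMap_mem_exteriorGrade_zero (Φ := Φ) 1
  rw [map_one] at h1
  have h : cb.bracket 1 x = 0 := by
    simpa using (cb.leibniz_left p 0 0 x 1 1 hx h1 h1).symm
  rw [Algebra.algebraMap_eq_smul_one, map_smul, LinearMap.smul_apply, h, smul_zero]

lemma bracket_algebraMap_right {p : ℕ} {x : ExteriorAlgebra ℝ Φ} (hx : x ∈ exteriorGrade Φ p)
    (c : ℝ) : cb.bracket x (algebraMap ℝ (ExteriorAlgebra ℝ Φ) c) = 0 := by
  have h1 := algebraMap_mem_exteriorGrade_zero (Φ := Φ) 1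
  rw [map_one] at h1
  have h : cb.bracket x 1 = 0 := by
    simpa using (cb.leibniz_right p 0 x 1 1 hx h1).symm
  rw [Algebra.algebraMap_eq_smul_one, map_smul, h, smul_zero]

/-- The degree `p + q - 2` of `bracket_grade` is truncated when `p + q < 2`; the bracket then
vanishes, so it is homogeneous of a degree with the parity of `p + q` in all cases. -/
lemma exists_bracket_mem_exteriorGrade {p q : ℕ} {ω α : ExteriorAlgebra ℝ Φ}
    (hω : ω ∈ exteriorGrade Φ p) (hα : α ∈ exteriorGrade Φ q) :
    ∃ k, cb.bracket ω α ∈ exteriorGrade Φ k ∧ (-1 : ℝ) ^ k = (-1) ^ (p + q) := by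
  rcases le_or_gt 2 (p + q) with h | h
  · refine ⟨p + q - 2, cb.bracket_grade p q ω α hω hα, ?_⟩
    rw [← Nat.sub_add_cancel h, pow_add (-1 : ℝ) (p + q - 2) 2]
    simp
  · refine ⟨p + q, ?_, rfl⟩
    obtain rfl | rfl : p = 0 ∨ q = 0 := by omega
    · obtain ⟨c, rfl⟩ := exists_algebraMap_eq_of_mem_exteriorGrade_zero hω
      simp [cb.bracket_algebraMap_left hα]
    · obtain ⟨c, rfl⟩ := exists_algebraMap_eq_of_mem_exteriorGrade_zero hα
      simp [cb.bracket_algebraMap_right hω]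

lemma bracket_skew_ι (a : Φ) {n : ℕ} {y : ExteriorAlgebra ℝ Φ} (hy : y ∈ exteriorGrade Φ n) :
    cb.bracket y (ι ℝ a) = -((-1 : ℝ) ^ n • cb.bracket (ι ℝ a) y) := by
  induction hy using Submodule.pow_induction_on_left' with
  | algebraMap c => simp [cb.bracket_algebraMap_left (ι_mem_exteriorGrade_one a),
      cb.bracket_algebraMap_right (ι_mem_exteriorGrade_one a)]
  | add x y i _ _ ihx ihy => simp only [map_add, LinearMap.add_apply, ihx, ihy, smul_add, neg_add]
  | mem_mul m hm i x hx ih =>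
    obtain ⟨η, rfl⟩ := hm
    rw [cb.leibniz_left 1 1 i (ι ℝ a) (ι ℝ η) x (ι_mem_exteriorGrade_one a)
        (ι_mem_exteriorGrade_one η) hx,
      cb.leibniz_right 1 1 (ι ℝ a) (ι ℝ η) x (ι_mem_exteriorGrade_one a)
        (ι_mem_exteriorGrade_one η),
      ih, cb.bracket_ι_ι, cb.bracket_ι_ι, real_inner_comm]
    simp only [Nat.succ_eq_add_one, mul_neg, mul_smul_comm]
    module

lemma bracket_skew {m n : ℕ} {x y : ExteriorAlgebra ℝ Φ} (hx : x ∈ exteriorGrade Φ m)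
    (hy : y ∈ exteriorGrade Φ n) :
    cb.bracket y x = -((-1 : ℝ) ^ (m * n) • cb.bracket x y) := by
  induction hx using Submodule.pow_induction_on_left' with
  | algebraMap c => simp [cb.bracket_algebraMap_left hy, cb.bracket_algebraMap_right hy]
  | add x₁ x₂ i _ _ ih₁ ih₂ =>
    simp only [map_add, LinearMap.add_apply, ih₁, ih₂, smul_add, neg_add]
  | mem_mul v hv i x hx ih =>
    obtain ⟨η, rfl⟩ := hv
    rw [cb.leibniz_right n 1 y (ι ℝ η) x hy (ι_mem_exteriorGrade_one η),
      cb.leibniz_left n 1 i y (ι ℝ η) x hy (ι_mem_exteriorGrade_one η) hx,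
      cb.bracket_skew_ι η hy, ih]
    simp only [Nat.succ_eq_add_one, mul_neg, neg_mul, mul_smul_comm, smul_mul_assoc]
    -- `ring_nf` leaves only a sign identity `(-1) ^ (k * 2) = 1`, which `simp` closes
    match_scalars <;> ring_nf
    simp

/-- The graded commutator `[D_ω, D_α] - D_{ {ω, α} }` of the inner derivations
`D_ω = {ω, ·}`; it vanishes exactly when the Jacobi identity holds for `ω`, `α`. -/
noncomputable def jacobiDefect (p q : ℕ) (ω α : ExteriorAlgebra ℝ Φ) :
    Module.End ℝ (ExteriorAlgebra ℝ Φ) :=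
  cb.bracket ω ∘ₗ cb.bracket α - (-1 : ℝ) ^ (p * q) • (cb.bracket α ∘ₗ cb.bracket ω)
    - cb.bracket (cb.bracket ω α)

lemma jacobiDefect_ι_mul {p q : ℕ} {ω α : ExteriorAlgebra ℝ Φ} (hω : ω ∈ exteriorGrade Φ p)
    (hα : α ∈ exteriorGrade Φ q) (η : Φ) (x : ExteriorAlgebra ℝ Φ) :
    cb.jacobiDefect p q ω α (ι ℝ η * x) =
      cb.jacobiDefect p q ω α (ι ℝ η) * x
        + (-1 : ℝ) ^ (p + q) • (ι ℝ η * cb.jacobiDefect p q ω α x) := by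
  have hη := ι_mem_exteriorGrade_one η
  obtain ⟨k₁, hk₁, hs₁⟩ := cb.exists_bracket_mem_exteriorGrade hα hη
  obtain ⟨k₂, hk₂, hs₂⟩ := cb.exists_bracket_mem_exteriorGrade hω hη
  obtain ⟨k₃, hk₃, hs₃⟩ := cb.exists_bracket_mem_exteriorGrade hω hα
  simp only [jacobiDefect, LinearMap.sub_apply, LinearMap.smul_apply, LinearMap.comp_apply]
  rw [cb.leibniz_right q 1 α _ x hα hη, cb.leibniz_right p 1 ω _ x hω hη, map_add, map_add,
    map_smul, map_smul, cb.leibniz_right p k₁ ω _ x hω hk₁,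
    cb.leibniz_right p 1 ω (ι ℝ η) (cb.bracket α x) hω hη, cb.leibniz_right q k₂ α _ x hα hk₂,
    cb.leibniz_right q 1 α (ι ℝ η) (cb.bracket ω x) hα hη,
    cb.leibniz_right k₃ 1 _ (ι ℝ η) x hk₃ hη, pow_mul' _ p k₁, hs₁, pow_mul' _ q k₂, hs₂,
    Nat.mul_one k₃, hs₃]
  simp only [sub_mul, mul_sub, smul_sub, mul_smul_comm, smul_mul_assoc]
  match_scalars <;> ring_nf
  simp

lemma jacobiDefect_algebraMap {p q : ℕ} {ω α : ExteriorAlgebra ℝ Φ}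
    (hω : ω ∈ exteriorGrade Φ p) (hα : α ∈ exteriorGrade Φ q) (c : ℝ) :
    cb.jacobiDefect p q ω α (algebraMap ℝ (ExteriorAlgebra ℝ Φ) c) = 0 := by
  obtain ⟨k, hk, -⟩ := cb.exists_bracket_mem_exteriorGrade hω hα
  simp [jacobiDefect, cb.bracket_algebraMap_right hω, cb.bracket_algebraMap_right hα,
    cb.bracket_algebraMap_right hk]

lemma jacobiDefect_eq_zero_of_forall_ι {p q : ℕ} {ω α : ExteriorAlgebra ℝ Φ}
    (hω : ω ∈ exteriorGrade Φ p) (hα : α ∈ exteriorGrade Φ q)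
    (h : ∀ η, cb.jacobiDefect p q ω α (ι ℝ η) = 0) : cb.jacobiDefect p q ω α = 0 := by
  refine LinearMap.ext fun x => ?_
  induction x using CliffordAlgebra.left_induction with
  | algebraMap c => exact cb.jacobiDefect_algebraMap hω hα c
  | add x y hx hy => rw [map_add, map_add, hx, hy]
  | ι_mul x η hx => simp [cb.jacobiDefect_ι_mul hω hα, h, hx]

noncomputable def jacobiator (p q r : ℕ) (ω α β : ExteriorAlgebra ℝ Φ) : ExteriorAlgebra ℝ Φ :=
  (-1 : ℝ) ^ (p * r) • cb.bracket ω (cb.bracket α β)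
    + (-1 : ℝ) ^ (q * p) • cb.bracket α (cb.bracket β ω)
    + (-1 : ℝ) ^ (r * q) • cb.bracket β (cb.bracket ω α)

lemma jacobiator_rotate (p q r : ℕ) (ω α β : ExteriorAlgebra ℝ Φ) :
    cb.jacobiator p q r ω α β = cb.jacobiator r p q β ω α := by
  unfold jacobiator
  abel

lemma jacobiator_eq_smul_jacobiDefect {p q r : ℕ} {ω α β : ExteriorAlgebra ℝ Φ}
    (hω : ω ∈ exteriorGrade Φ p) (hα : α ∈ exteriorGrade Φ q) (hβ : β ∈ exteriorGrade Φ r) :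
    cb.jacobiator p q r ω α β = (-1 : ℝ) ^ (p * r) • cb.jacobiDefect p q ω α β := by
  obtain ⟨k, hk, hs⟩ := cb.exists_bracket_mem_exteriorGrade hω hα
  rw [jacobiator, jacobiDefect, cb.bracket_skew hω hβ, cb.bracket_skew hk hβ, pow_mul _ k r, hs]
  simp only [LinearMap.sub_apply, LinearMap.smul_apply, LinearMap.comp_apply, map_neg,
    map_smul]
  match_scalars <;> ring_nf
  simp

lemma jacobiator_eq_zero_iff {p q r : ℕ} {ω α β : ExteriorAlgebra ℝ Φ}
    (hω : ω ∈ exteriorGrade Φ p) (hα : α ∈ exteriorGrade Φ q) (hβ : β ∈ exteriorGrade Φ r) :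
    cb.jacobiator p q r ω α β = 0 ↔ cb.jacobiDefect p q ω α β = 0 := by
  simp [cb.jacobiator_eq_smul_jacobiDefect hω hα hβ]

lemma jacobiDefect_apply_ι_eq_zero_iff {p q : ℕ} {ω α : ExteriorAlgebra ℝ Φ}
    (hω : ω ∈ exteriorGrade Φ p) (hα : α ∈ exteriorGrade Φ q) (η : Φ) :
    cb.jacobiDefect p q ω α (ι ℝ η) = 0 ↔ cb.jacobiDefect 1 p (ι ℝ η) ω α = 0 := by
  have hη := ι_mem_exteriorGrade_one η
  rw [← cb.jacobiator_eq_zero_iff hω hα hη, jacobiator_rotate,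
    cb.jacobiator_eq_zero_iff hη hω hα]

lemma jacobiDefect_ι_ι (a b : Φ) : cb.jacobiDefect 1 1 (ι ℝ a) (ι ℝ b) = 0 := by
  refine cb.jacobiDefect_eq_zero_of_forall_ι (ι_mem_exteriorGrade_one a)
    (ι_mem_exteriorGrade_one b) fun c => ?_
  simp only [jacobiDefect, LinearMap.sub_apply, LinearMap.smul_apply, LinearMap.comp_apply,
    cb.bracket_ι_ι, cb.bracket_algebraMap_right (ι_mem_exteriorGrade_one _),
    cb.bracket_algebraMap_left (ι_mem_exteriorGrade_one c), smul_zero, sub_zero]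

lemma jacobiDefect_ι {p : ℕ} {ω : ExteriorAlgebra ℝ Φ} (hω : ω ∈ exteriorGrade Φ p) (a : Φ) :
    cb.jacobiDefect 1 p (ι ℝ a) ω = 0 :=
  cb.jacobiDefect_eq_zero_of_forall_ι (ι_mem_exteriorGrade_one a) hω fun b =>
    (cb.jacobiDefect_apply_ι_eq_zero_iff (ι_mem_exteriorGrade_one a) hω b).2 <| by
      rw [jacobiDefect_ι_ι, LinearMap.zero_apply]

lemma jacobiDefect_eq_zero {p q : ℕ} {ω α : ExteriorAlgebra ℝ Φ}
    (hω : ω ∈ exteriorGrade Φ p) (hα : α ∈ exteriorGrade Φ q) : cb.jacobiDefect p q ω α = 0 :=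
  cb.jacobiDefect_eq_zero_of_forall_ι hω hα fun η =>
    (cb.jacobiDefect_apply_ι_eq_zero_iff hω hα η).2 <| by
      rw [cb.jacobiDefect_ι hω, LinearMap.zero_apply]

end CasalbuoniBracket

theorem casalbuoni_graded_jacobi_general
    {Φ : Type*} [NormedAddCommGroup Φ] [InnerProductSpace ℝ Φ]
    (cb : CasalbuoniBracket Φ) (p q r : ℕ) (ω α β : ExteriorAlgebra ℝ Φ)
    (hω : ω ∈ exteriorGrade Φ p) (hα : α ∈ exteriorGrade Φ q) (hβ : β ∈ exteriorGrade Φ r) :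
    ((-1 : ℝ) ^ (p * r)) • cb.bracket ω (cb.bracket α β)
      + ((-1 : ℝ) ^ (q * p)) • cb.bracket α (cb.bracket β ω)
      + ((-1 : ℝ) ^ (r * q)) • cb.bracket β (cb.bracket ω α) = 0 :=
  (cb.jacobiator_eq_zero_iff hω hα hβ).2 <| by
    rw [cb.jacobiDefect_eq_zero hω hα, LinearMap.zero_apply]

/-- The graded Jacobi identity for the Casalbuoni bracket. -/
theorem casalbuoni_graded_jacobi
    {Φ : Type*} [NormedAddCommGroup Φ] [InnerProductSpace ℝ Φ] [FiniteDimensional ℝ Φ]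
    (cb : CasalbuoniBracket Φ) (p q r : ℕ) (ω α β : ExteriorAlgebra ℝ Φ)
    (hω : ω ∈ exteriorGrade Φ p) (hα : α ∈ exteriorGrade Φ q) (hβ : β ∈ exteriorGrade Φ r) :
    ((-1 : ℝ) ^ (p * r)) • cb.bracket ω (cb.bracket α β)
      + ((-1 : ℝ) ^ (q * p)) • cb.bracket α (cb.bracket β ω)
      + ((-1 : ℝ) ^ (r * q)) • cb.bracket β (cb.bracket ω α) = 0 :=
  casalbuoni_graded_jacobi_general cb p q r ω α β hω hα hβ
end

section
/- Let Φ be a finite-dimensional real inner product space, H an anti-self-adjoint linear map on Φ, and ω its associated 2-form under the index-raising isomorphism. Then for any vector η ∈ Φ, (1/4){ω, η} = H(η), where {·,·} is the Casalbuoni bracket. Consequently, the derivation (1/4){ω, ·} on Λ(Φ) coincides with the derivation induced by H. -/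
open scoped RealInnerProductSpace
open ExteriorAlgebra

/-! On vectors the graded Leibniz rule gives `{Hx ∧ y, η} = 2⟪y, η⟫ Hx - 2⟪Hx, η⟫ y`. Summed over
an orthonormal basis, the first terms give `2 Hη` and, by antisymmetry of `H`, so do the second:
`{ω, η} = 4 Hη`. Since `ω` has even degree, `{ω, ·}` obeys the ungraded Leibniz rule for left
multiplication by vectors, as `D` does; two such maps agreeing on `1` and on vectors agree
everywhere, because every element is built from scalars by left multiplication with vectors. -/

theorem CliffordAlgebra.linearMap_eq_of_leibniz_ι_mul {R M : Type*} [CommRing R]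
    [AddCommGroup M] [Module R M] {Q : QuadraticForm R M}
    (D D' : CliffordAlgebra Q →ₗ[R] CliffordAlgebra Q) (h1 : D 1 = D' 1)
    (hι : ∀ m, D (ι Q m) = D' (ι Q m))
    (hD : ∀ m x, D (ι Q m * x) = D (ι Q m) * x + ι Q m * D x)
    (hD' : ∀ m x, D' (ι Q m * x) = D' (ι Q m) * x + ι Q m * D' x) :
    D = D' := by
  ext x
  induction x using CliffordAlgebra.left_induction with
  | algebraMap r => rw [Algebra.algebraMap_eq_smul_one, map_smul, map_smul, h1]
  | add x y hx hy => rw [map_add, map_add, hx, hy]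
  | ι_mul x m hx => rw [hD, hD', hx, hι]

theorem map_one_eq_zero_of_leibniz {R A : Type*} [CommSemiring R] [Ring A] [Algebra R A]
    (D : A →ₗ[R] A) (hD : ∀ a b, D (a * b) = D a * b + a * D b) : D 1 = 0 := by
  simpa using hD 1 1

theorem ι_mem_exteriorGrade_one_s14 {Φ : Type*} [AddCommGroup Φ] [Module ℝ Φ] (x : Φ) :
    ι ℝ x ∈ exteriorGrade Φ 1 := by
  simpa only [exteriorGrade, pow_one] using LinearMap.mem_range_self _ x

theorem one_mem_exteriorGrade_zero (Φ : Type*) [AddCommGroup Φ] [Module ℝ Φ] :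
    (1 : ExteriorAlgebra ℝ Φ) ∈ exteriorGrade Φ 0 := by
  rw [exteriorGrade, pow_zero]
  exact Submodule.one_le.mp le_rfl

theorem ι_mul_ι_mem_exteriorGrade_two {Φ : Type*} [AddCommGroup Φ] [Module ℝ Φ] (x y : Φ) :
    ι ℝ x * ι ℝ y ∈ exteriorGrade Φ 2 := by
  rw [show exteriorGrade Φ 2 = exteriorGrade Φ 1 * exteriorGrade Φ 1 by
    simp only [exteriorGrade, pow_one, sq]]
  exact Submodule.mul_mem_mul (ι_mem_exteriorGrade_one_s14 x) (ι_mem_exteriorGrade_one_s14 y)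

namespace CasalbuoniBracket

variable {Φ : Type*} [NormedAddCommGroup Φ] [InnerProductSpace ℝ Φ] (cb : CasalbuoniBracket Φ)

theorem bracket_one {p : ℕ} {ω : ExteriorAlgebra ℝ Φ} (hω : ω ∈ exteriorGrade Φ p) :
    cb.bracket ω 1 = 0 := by
  simpa using cb.leibniz_right p 0 ω 1 1 hω (one_mem_exteriorGrade_zero Φ)

theorem bracket_ι_mul_of_even {p : ℕ} (hp : Even p) {ω : ExteriorAlgebra ℝ Φ}
    (hω : ω ∈ exteriorGrade Φ p) (m : Φ) (x : ExteriorAlgebra ℝ Φ) :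
    cb.bracket ω (ι ℝ m * x) = cb.bracket ω (ι ℝ m) * x + ι ℝ m * cb.bracket ω x := by
  rw [cb.leibniz_right p 1 ω _ x hω (ι_mem_exteriorGrade_one_s14 m), mul_one, hp.neg_one_pow,
    one_smul]

theorem bracket_ι_mul_ι_ι (a b η : Φ) :
    cb.bracket (ι ℝ a * ι ℝ b) (ι ℝ η) = (2 : ℝ) • ι ℝ (⟪b, η⟫ • a - ⟪a, η⟫ • b) := by
  rw [cb.leibniz_left 1 1 1 _ _ _ (ι_mem_exteriorGrade_one_s14 η) (ι_mem_exteriorGrade_one_s14 a)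
      (ι_mem_exteriorGrade_one_s14 b), cb.bracket_ι_ι, cb.bracket_ι_ι, ← Algebra.commutes,
    ← Algebra.smul_def, ← Algebra.smul_def, map_sub, map_smul, map_smul, smul_sub, smul_smul,
    smul_smul, smul_smul]
  norm_num
  abel

end CasalbuoniBracket

theorem OrthonormalBasis.sum_inner_smul_sub_of_antisymm {ι Φ : Type*} [Fintype ι]
    [NormedAddCommGroup Φ] [InnerProductSpace ℝ Φ] (e : OrthonormalBasis ι ℝ Φ)
    (H : Φ →ₗ[ℝ] Φ) (hH : ∀ v w : Φ, ⟪H v, w⟫ = -⟪v, H w⟫) (η : Φ) :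
    ∑ i, (⟪e i, η⟫ • H (e i) - ⟪H (e i), η⟫ • e i) = (2 : ℝ) • H η := by
  simp only [hH, neg_smul, sub_neg_eq_add, Finset.sum_add_distrib, ← map_smul, ← map_sum,
    e.sum_repr', two_smul, map_add]

theorem casalbuoni_bracket_of_two_form_is_generator_general
    {Φ : Type*} [NormedAddCommGroup Φ] [InnerProductSpace ℝ Φ]
    (cb : CasalbuoniBracket Φ)
    (H : Φ →ₗ[ℝ] Φ) (hH : ∀ v w : Φ, ⟪H v, w⟫ = -⟪v, H w⟫)
    (e : OrthonormalBasis (Fin (Module.finrank ℝ Φ)) ℝ Φ)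
    (ω : ExteriorAlgebra ℝ Φ)
    (hω : ω = ∑ i, ι ℝ (H (e i)) * ι ℝ (e i)) :
    (∀ η : Φ, (1 / 4 : ℝ) • cb.bracket ω (ι ℝ η) = ι ℝ (H η)) ∧
    (∀ D : ExteriorAlgebra ℝ Φ →ₗ[ℝ] ExteriorAlgebra ℝ Φ,
      (∀ η : Φ, D (ι ℝ η) = ι ℝ (H η)) →
      (∀ A C : ExteriorAlgebra ℝ Φ, D (A * C) = D A * C + A * D C) →
      ∀ A : ExteriorAlgebra ℝ Φ, (1 / 4 : ℝ) • cb.bracket ω A = D A) := by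
  have hω2 : ω ∈ exteriorGrade Φ 2 := hω ▸ Submodule.sum_mem _ fun i _ ↦
    ι_mul_ι_mem_exteriorGrade_two (H (e i)) (e i)
  have hgen (η : Φ) : (1 / 4 : ℝ) • cb.bracket ω (ι ℝ η) = ι ℝ (H η) := by
    simp_rw [hω, map_sum, LinearMap.sum_apply, cb.bracket_ι_mul_ι_ι]
    rw [← Finset.smul_sum, ← map_sum, e.sum_inner_smul_sub_of_antisymm H hH, map_smul, smul_smul,
      smul_smul]
    norm_num
  refine ⟨hgen, fun D hDι hD A ↦ ?_⟩
  rw [← LinearMap.smul_apply]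
  congr 1
  refine CliffordAlgebra.linearMap_eq_of_leibniz_ι_mul ((1 / 4 : ℝ) • cb.bracket ω) D ?_
    (fun η ↦ (hgen η).trans (hDι η).symm) (fun m x ↦ ?_) (fun m x ↦ hD _ x)
  · rw [LinearMap.smul_apply, cb.bracket_one hω2, map_one_eq_zero_of_leibniz D hD, smul_zero]
  · simp only [LinearMap.smul_apply, cb.bracket_ι_mul_of_even even_two hω2, smul_add,
      smul_mul_assoc, mul_smul_comm]

/-- For an anti-self-adjoint map `H` with associated 2-form
`ω = Σᵢ (H eᵢ) ∧ eᵢ` (index raising via an orthonormal basis), the Casalbuoni-bracket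
action `(1/4){ω, ·}` reproduces `H` on vectors, and hence coincides with the
derivation of `Λ(Φ)` induced by `H`. -/
theorem casalbuoni_bracket_of_two_form_is_generator
    {Φ : Type*} [NormedAddCommGroup Φ] [InnerProductSpace ℝ Φ] [FiniteDimensional ℝ Φ]
    (cb : CasalbuoniBracket Φ)
    (H : Φ →ₗ[ℝ] Φ) (hH : ∀ v w : Φ, ⟪H v, w⟫ = -⟪v, H w⟫)
    (e : OrthonormalBasis (Fin (Module.finrank ℝ Φ)) ℝ Φ)
    (ω : ExteriorAlgebra ℝ Φ)
    (hω : ω = ∑ i, ι ℝ (H (e i)) * ι ℝ (e i)) :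
    (∀ η : Φ, (1 / 4 : ℝ) • cb.bracket ω (ι ℝ η) = ι ℝ (H η)) ∧
    (∀ D : ExteriorAlgebra ℝ Φ →ₗ[ℝ] ExteriorAlgebra ℝ Φ,
      (∀ η : Φ, D (ι ℝ η) = ι ℝ (H η)) →
      (∀ A C : ExteriorAlgebra ℝ Φ, D (A * C) = D A * C + A * D C) →
      ∀ A : ExteriorAlgebra ℝ Φ, (1 / 4 : ℝ) • cb.bracket ω A = D A) :=
  casalbuoni_bracket_of_two_form_is_generator_general cb H hH e ω hω
end

section
/- (Wick's theorem for Clifford algebras) In the Clifford algebra of a real inner product space Φ, the product of vectors η₁ ⋯ η_k equals the sum over all partial pairings (contraction patterns) of {1,...,k} of (−1)^σ times the product of the inner products g(η_i, η_j) over contracted pairs times the wedge product of the uncontracted vectors, where (−1)^σ is the sign of the permutation bringing contracted indices adjacent. -/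
open scoped RealInnerProductSpace

/-- The quadratic form `η ↦ g(η, η)` of a real inner product space, whose Clifford
algebra realizes the relation `ηη' + η'η = 2 g(η, η')`. -/
noncomputable def innerQuadraticForm (Φ : Type*) [NormedAddCommGroup Φ]
    [InnerProductSpace ℝ Φ] : QuadraticForm ℝ Φ :=
  LinearMap.BilinMap.toQuadraticMap (innerₗ Φ : LinearMap.BilinForm ℝ Φ)

/-- A contraction pattern on `{1, …, k}` is encoded by an involution `f`; the
contracted pairs are `{i, f i}` with `i < f i`, and the uncontracted indices are the
fixed points of `f`. The number of crossings of `f`: pairs `{i, f i}`, `{j, f j}`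
with `i < j < f i < f j`. -/
def wickCrossings {k : ℕ} (f : Equiv.Perm (Fin k)) : ℕ :=
  ((Finset.univ : Finset (Fin k × Fin k)).filter
    (fun x => x.1 < f x.1 ∧ x.2 < f x.2 ∧ x.1 < x.2 ∧ x.2 < f x.1 ∧ f x.1 < f x.2)).card

/-- The number of uncontracted indices enclosed by contracted pairs. -/
def wickNests {k : ℕ} (f : Equiv.Perm (Fin k)) : ℕ :=
  ∑ i ∈ Finset.univ.filter (fun i => i < f i),
    (Finset.univ.filter (fun m => f m = m ∧ i < m ∧ m < f i)).card

/-- The sign `(−1)^σ` of the minimal permutation bringing the contracted indices of the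
pairing `f` next to each other. -/
noncomputable def wickSign {k : ℕ} (f : Equiv.Perm (Fin k)) : ℝ :=
  (-1 : ℝ) ^ (wickCrossings f + wickNests f)

/-- The product of the contractions `g(ηᵢ, η_{f i})` over the contracted pairs of `f`. -/
noncomputable def wickContractions {Φ : Type*} [NormedAddCommGroup Φ]
    [InnerProductSpace ℝ Φ] {k : ℕ} (f : Equiv.Perm (Fin k)) (η : Fin k → Φ) : ℝ :=
  ∏ i ∈ Finset.univ.filter (fun i => i < f i), ⟪η i, η (f i)⟫

/-- The wedge product of the uncontracted vectors, in their original order. -/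
noncomputable def wickWedge {Φ : Type*} [NormedAddCommGroup Φ]
    [InnerProductSpace ℝ Φ] {k : ℕ} (f : Equiv.Perm (Fin k)) (η : Fin k → Φ) :
    ExteriorAlgebra ℝ Φ :=
  (((Finset.univ.filter (fun i => f i = i)).sort (· ≤ ·)).map
    (fun i => ExteriorAlgebra.ι ℝ (η i))).prod

/-!
Under `equivExterior`, left Clifford multiplication by `m` becomes `x ↦ m ∧ x + g(m, ·) ⌋ x`, so
`E(η₀ ⋯ η_k) = η₀ ∧ E(η₁ ⋯ η_k) + g(η₀, ·) ⌋ E(η₁ ⋯ η_k)` and it suffices to show that the Wick sum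
obeys the same recursion. Write an involution of `Fin (k + 1)` as `decomposeFin.symm (p, f)`:
either `p = 0` and `f` is an involution, whose term gets multiplied by `η₀ ∧`; or `p = j + 1` for
a fixed point `j` of the involution `f`, and the term is the `j`-th summand of the Leibniz
expansion of `g(η₀, ·) ⌋ (term of f)`, whose sign `(-1)^#{fixed points of f below j}` is exactly
the change in crossings plus nestings.
-/

namespace ExteriorAlgebra

variable (R : Type*) {M α β : Type*} [CommRing R] [AddCommGroup M] [Module R M]
  [LinearOrder α] [LinearOrder β]

noncomputable def orderedWedge (v : α → M) (s : Finset α) : ExteriorAlgebra R M :=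
  ((s.sort (· ≤ ·)).map (fun i => ι R (v i))).prod

variable {R}

theorem orderedWedge_empty (v : α → M) : orderedWedge R v ∅ = 1 := by
  simp [orderedWedge]

theorem orderedWedge_insert_of_lt (v : α → M) {s : Finset α} {a : α} (h : ∀ b ∈ s, a < b) :
    orderedWedge R v (insert a s) = ι R (v a) * orderedWedge R v s := by
  rw [orderedWedge, Finset.sort_insert _ (fun b hb => (h b hb).le) fun ha => (h a ha).false,
    List.map_cons, List.prod_cons, orderedWedge]

theorem orderedWedge_map (v : β → M) (e : α ↪o β) (s : Finset α) :
    orderedWedge R v (s.map e.toEmbedding) = orderedWedge R (v ∘ e) s := by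
  classical
  induction s using Finset.induction_on_min with
  | empty => simp [orderedWedge_empty]
  | insert a s ha ih =>
    have hlt : ∀ b ∈ s.map e.toEmbedding, e.toEmbedding a < b := by simpa using ha
    rw [Finset.map_insert, orderedWedge_insert_of_lt v hlt, orderedWedge_insert_of_lt _ ha, ih]
    rfl

theorem contractLeft_orderedWedge (v : α → M) (d : Module.Dual R M) (s : Finset α) :
    CliffordAlgebra.contractLeft d (orderedWedge R v s)
      = ∑ j ∈ s, ((-1 : R) ^ (s.filter (· < j)).card * d (v j)) • orderedWedge R v (s.erase j) := by
  classical
  induction s using Finset.induction_on_min with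
  | empty => simp [orderedWedge_empty]
  | insert a s ha ih =>
    have has : a ∉ s := fun h => (ha a h).false
    rw [orderedWedge_insert_of_lt v ha, CliffordAlgebra.contractLeft_ι_mul,
      ih, Finset.sum_insert has, Finset.erase_insert has, sub_eq_add_neg, Finset.mul_sum,
      ← Finset.sum_neg_distrib]
    congr 1
    · simp [Finset.filter_insert, Finset.filter_eq_empty_iff.2 fun b hb => (ha b hb).not_gt]
    · refine Finset.sum_congr rfl fun j hj => ?_
      have haj : a < j := ha j hj
      rw [Finset.filter_insert, if_pos haj, Finset.card_insert_of_notMem (by simp [has]),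
        Finset.erase_insert_of_ne haj.ne, orderedWedge_insert_of_lt v
          fun b hb => ha b (Finset.mem_of_mem_erase hb), pow_succ, Algebra.mul_smul_comm,
        ← neg_smul]
      congr 1
      ring

end ExteriorAlgebra

namespace CliffordAlgebra

variable {R M : Type*} [CommRing R] [AddCommGroup M] [Module R M] [Invertible (2 : R)]

theorem equivExterior_ι_mul (Q : QuadraticForm R M) (m : M) (x : CliffordAlgebra Q) :
    equivExterior Q (ι Q m * x)
      = ExteriorAlgebra.ι R m * equivExterior Q x
        + contractLeft (QuadraticMap.associated Q m) (equivExterior Q x) := by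
  simp [equivExterior, changeForm_ι_mul, sub_eq_add_neg, ExteriorAlgebra.ι]

end CliffordAlgebra

theorem associated_innerQuadraticForm (Φ : Type*) [NormedAddCommGroup Φ] [InnerProductSpace ℝ Φ] :
    QuadraticMap.associated (innerQuadraticForm Φ) = innerₗ Φ :=
  QuadraticMap.associated_left_inverse ℝ fun x y => (real_inner_comm x y).symm

namespace Equiv.Perm

variable {k : ℕ}

theorem mul_self_eq_one_iff_involutive {α : Type*} (f : Perm α) :
    f * f = 1 ↔ Function.Involutive f :=
  ⟨fun h x => congr($h x), fun h => Equiv.ext h⟩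

theorem decomposeFin_symm_succ_apply_self {f : Perm (Fin k)} {j : Fin k} (hj : f j = j) :
    decomposeFin.symm (j.succ, f) j.succ = 0 := by
  rw [decomposeFin_symm_apply_succ, hj, swap_apply_right]

theorem decomposeFin_symm_succ_apply_succ {f : Perm (Fin k)} {i j : Fin k} (hj : f j = j)
    (hi : i ≠ j) : decomposeFin.symm (j.succ, f) i.succ = (f i).succ := by
  have hfi : (f i).succ ≠ j.succ := by
    rw [Ne, Fin.succ_inj, ← hj]
    exact f.injective.ne hi
  rw [decomposeFin_symm_apply_succ, swap_apply_of_ne_of_ne (Fin.succ_ne_zero _) hfi]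

theorem decomposeFin_symm_succ_apply_succ_eq_ite {f : Perm (Fin k)} {j : Fin k} (hj : f j = j)
    (i : Fin k) : decomposeFin.symm (j.succ, f) i.succ = if i = j then 0 else (f i).succ := by
  split_ifs with hi
  · rw [hi, decomposeFin_symm_succ_apply_self hj]
  · exact decomposeFin_symm_succ_apply_succ hj hi

theorem involutive_decomposeFin_symm_zero_iff (f : Perm (Fin k)) :
    Function.Involutive (decomposeFin.symm (0, f)) ↔ Function.Involutive f := by
  simp [Function.Involutive, Fin.forall_fin_succ]

theorem involutive_decomposeFin_symm_succ_iff (f : Perm (Fin k)) (j : Fin k) :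
    Function.Involutive (decomposeFin.symm (j.succ, f)) ↔ Function.Involutive f ∧ f j = j := by
  set g := decomposeFin.symm (j.succ, f)
  constructor
  · intro hg
    have hj : f j = j := by
      have h0 : g j.succ = 0 := by simpa [g] using hg 0
      rw [decomposeFin_symm_apply_succ, swap_apply_eq_iff, swap_apply_left, Fin.succ_inj] at h0
      exact h0
    refine ⟨fun i => ?_, hj⟩
    rcases eq_or_ne i j with rfl | hi
    · rw [hj, hj]
    have hfi : f i ≠ j := by rw [← hj]; exact f.injective.ne hi
    have := hg i.succ
    rwa [decomposeFin_symm_succ_apply_succ hj hi, decomposeFin_symm_succ_apply_succ hj hfi,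
      Fin.succ_inj] at this
  · rintro ⟨hf, hj⟩ x
    induction x using Fin.cases with
    | zero => rw [decomposeFin_symm_apply_zero, decomposeFin_symm_succ_apply_self hj]
    | succ i =>
      rcases eq_or_ne i j with rfl | hi
      · rw [decomposeFin_symm_succ_apply_self hj, decomposeFin_symm_apply_zero]
      · have hfi : f i ≠ j := by rw [← hj]; exact f.injective.ne hi
        rw [decomposeFin_symm_succ_apply_succ hj hi, decomposeFin_symm_succ_apply_succ hj hfi, hf]

end Equiv.Perm

section WickData

open Equiv Perm Finset ExteriorAlgebra

variable {k : ℕ}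

theorem filter_lt_decomposeFin_symm_zero (f : Perm (Fin k)) :
    univ.filter (fun i => i < decomposeFin.symm (0, f) i)
      = (univ.filter fun i => i < f i).map (Fin.succEmb k) := by
  ext x
  induction x using Fin.cases with
  | zero => simp
  | succ i => simp

theorem filter_fixed_decomposeFin_symm_zero (f : Perm (Fin k)) :
    univ.filter (fun i => decomposeFin.symm (0, f) i = i)
      = insert 0 ((univ.filter fun i => f i = i).map (Fin.succEmb k)) := by
  ext x
  induction x using Fin.cases with
  | zero => simp
  | succ i => simp

theorem filter_lt_decomposeFin_symm_succ {f : Perm (Fin k)} {j : Fin k} (hj : f j = j) :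
    univ.filter (fun i => i < decomposeFin.symm (j.succ, f) i)
      = insert 0 ((univ.filter fun i => i < f i).map (Fin.succEmb k)) := by
  ext x
  induction x using Fin.cases with
  | zero => simp
  | succ i =>
    rcases eq_or_ne i j with rfl | hi
    · simp [decomposeFin_symm_succ_apply_self hj, hj]
    · simp [decomposeFin_symm_succ_apply_succ hj hi]

theorem filter_fixed_decomposeFin_symm_succ {f : Perm (Fin k)} {j : Fin k} (hj : f j = j) :
    univ.filter (fun i => decomposeFin.symm (j.succ, f) i = i)
      = ((univ.filter fun i => f i = i).erase j).map (Fin.succEmb k) := by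
  ext x
  induction x using Fin.cases with
  | zero => simp [eq_comm]
  | succ i =>
    rcases eq_or_ne i j with rfl | hi
    · simp [decomposeFin_symm_succ_apply_self hj, (Fin.succ_ne_zero i).symm]
    · simp [decomposeFin_symm_succ_apply_succ hj hi, hi]

variable {Φ : Type*} [NormedAddCommGroup Φ] [InnerProductSpace ℝ Φ]

theorem wickContractions_decomposeFin_symm_zero (f : Perm (Fin k)) (η : Fin (k + 1) → Φ) :
    wickContractions (decomposeFin.symm (0, f)) η = wickContractions f (η ∘ Fin.succ) := by
  rw [wickContractions, filter_lt_decomposeFin_symm_zero, prod_map]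
  exact prod_congr rfl fun i _ => by simp

theorem wickContractions_decomposeFin_symm_succ {f : Perm (Fin k)} {j : Fin k} (hj : f j = j)
    (η : Fin (k + 1) → Φ) :
    wickContractions (decomposeFin.symm (j.succ, f)) η
      = ⟪η 0, η j.succ⟫ * wickContractions f (η ∘ Fin.succ) := by
  rw [wickContractions, filter_lt_decomposeFin_symm_succ hj, prod_insert (by simp),
    prod_map, decomposeFin_symm_apply_zero]
  congr 1
  refine prod_congr rfl fun i hi => ?_
  have hij : i ≠ j := by rintro rfl; simp [hj] at hi
  simp [decomposeFin_symm_succ_apply_succ hj hij]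

theorem wickWedge_eq_orderedWedge (f : Perm (Fin k)) (η : Fin k → Φ) :
    wickWedge f η = orderedWedge ℝ η (univ.filter fun i => f i = i) :=
  rfl

theorem wickWedge_decomposeFin_symm_zero (f : Perm (Fin k)) (η : Fin (k + 1) → Φ) :
    wickWedge (decomposeFin.symm (0, f)) η = ι ℝ (η 0) * wickWedge f (η ∘ Fin.succ) := by
  rw [wickWedge_eq_orderedWedge, filter_fixed_decomposeFin_symm_zero,
    orderedWedge_insert_of_lt _ (by simp), ← Fin.succOrderEmb_toEmbedding,
    orderedWedge_map]
  rfl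

theorem wickWedge_decomposeFin_symm_succ {f : Perm (Fin k)} {j : Fin k} (hj : f j = j)
    (η : Fin (k + 1) → Φ) :
    wickWedge (decomposeFin.symm (j.succ, f)) η
      = orderedWedge ℝ (η ∘ Fin.succ) ((univ.filter fun i => f i = i).erase j) := by
  rw [wickWedge_eq_orderedWedge, filter_fixed_decomposeFin_symm_succ hj,
    ← Fin.succOrderEmb_toEmbedding, orderedWedge_map]
  rfl

end WickData

section WickSign

open Equiv Perm Finset

variable {k : ℕ}

theorem wickNests_eq_card (f : Perm (Fin k)) :
    wickNests f = ((univ : Finset (Fin k × Fin k)).filter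
      fun x => x.1 < f x.1 ∧ f x.2 = x.2 ∧ x.1 < x.2 ∧ x.2 < f x.1).card := by
  simp [wickNests, card_filter, Fintype.sum_prod_type, sum_filter, ite_and]

theorem wickCrossings_decomposeFin_symm_zero (f : Perm (Fin k)) :
    wickCrossings (decomposeFin.symm (0, f)) = wickCrossings f := by
  rw [wickCrossings, wickCrossings, card_filter, card_filter]
  simp [Fintype.sum_prod_type, Fin.sum_univ_succ, -sum_boole]

theorem wickNests_decomposeFin_symm_zero (f : Perm (Fin k)) :
    wickNests (decomposeFin.symm (0, f)) = wickNests f := by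
  rw [wickNests_eq_card, wickNests_eq_card, card_filter, card_filter]
  simp [Fintype.sum_prod_type, Fin.sum_univ_succ, -sum_boole]

def enclosingPairCount (f : Perm (Fin k)) (j : Fin k) : ℕ :=
  (univ.filter fun i => i < f i ∧ i < j ∧ j < f i).card

theorem wickCrossings_decomposeFin_symm_succ {f : Perm (Fin k)} {j : Fin k} (hj : f j = j) :
    wickCrossings (decomposeFin.symm (j.succ, f)) = enclosingPairCount f j + wickCrossings f := by
  rw [wickCrossings, wickCrossings, enclosingPairCount, card_filter, card_filter, card_filter]
  simp only [Fintype.sum_prod_type, Fin.sum_univ_succ, decomposeFin_symm_succ_apply_succ_eq_ite hj,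
    decomposeFin_symm_apply_zero]
  congr 1
  · simp only [Fin.succ_pos, Fin.not_lt_zero, true_and, false_and, and_false, if_false,
      zero_add, Fin.succ_lt_succ_iff]
    refine sum_congr rfl fun q _ => ?_
    by_cases hq : q = j <;> simp [hq, hj]
  · refine sum_congr rfl fun i _ => ?_
    simp only [Fin.not_lt_zero, false_and, and_false, if_false, zero_add, Fin.succ_lt_succ_iff]
    refine sum_congr rfl fun q _ => ?_
    by_cases hi : i = j <;> by_cases hq : q = j <;> simp [hi, hq, hj]

def wickNestsAvoiding (f : Perm (Fin k)) (j : Fin k) : ℕ :=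
  ((univ : Finset (Fin k × Fin k)).filter
    fun x => x.1 < f x.1 ∧ (f x.2 = x.2 ∧ x.2 ≠ j) ∧ x.1 < x.2 ∧ x.2 < f x.1).card

theorem wickNests_eq_enclosingPairCount_add {f : Perm (Fin k)} {j : Fin k} (hj : f j = j) :
    wickNests f = enclosingPairCount f j + wickNestsAvoiding f j := by
  rw [wickNests_eq_card, enclosingPairCount, wickNestsAvoiding, card_filter, card_filter,
    card_filter, Fintype.sum_prod_type, Fintype.sum_prod_type, ← sum_add_distrib]
  refine sum_congr rfl fun i _ => ?_
  rw [Fintype.sum_eq_add_sum_compl j, Fintype.sum_eq_add_sum_compl j]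
  simp only [hj, ne_eq, not_true_eq_false, and_false, false_and, true_and, if_false, zero_add]
  exact congrArg _ (sum_congr rfl fun q hq => by simp [(by simpa using hq : q ≠ j)])

theorem wickNests_decomposeFin_symm_succ {f : Perm (Fin k)} {j : Fin k} (hj : f j = j) :
    wickNests (decomposeFin.symm (j.succ, f))
      = ((univ.filter fun i => f i = i).filter (· < j)).card + wickNestsAvoiding f j := by
  rw [wickNests_eq_card, filter_filter, wickNestsAvoiding, card_filter, card_filter, card_filter]
  simp only [Fintype.sum_prod_type, Fin.sum_univ_succ, decomposeFin_symm_succ_apply_succ_eq_ite hj,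
    decomposeFin_symm_apply_zero]
  congr 1
  · simp only [Fin.succ_pos, Fin.not_lt_zero, true_and, false_and, and_false, if_false,
      zero_add, Fin.succ_lt_succ_iff]
    refine sum_congr rfl fun q _ => ?_
    by_cases hq : q = j <;> simp [hq, hj]
  · refine sum_congr rfl fun i _ => ?_
    simp only [Fin.not_lt_zero, false_and, and_false, if_false, zero_add, Fin.succ_lt_succ_iff]
    refine sum_congr rfl fun q _ => ?_
    by_cases hi : i = j <;> by_cases hq : q = j <;> simp [hi, hq, hj, (Fin.succ_ne_zero j).symm]

theorem wickSign_decomposeFin_symm_zero (f : Perm (Fin k)) :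
    wickSign (decomposeFin.symm (0, f)) = wickSign f := by
  rw [wickSign, wickSign, wickCrossings_decomposeFin_symm_zero, wickNests_decomposeFin_symm_zero]

/-- Pairing `0` with `j + 1` adds a crossing with every pair enclosing `j` and a nesting of every
fixed point below `j`, while `j` itself stops being a nested fixed point. -/
theorem wickSign_decomposeFin_symm_succ {f : Perm (Fin k)} {j : Fin k} (hj : f j = j) :
    wickSign (decomposeFin.symm (j.succ, f))
      = (-1) ^ ((univ.filter fun i => f i = i).filter (· < j)).card * wickSign f := by
  rw [wickSign, wickSign, wickCrossings_decomposeFin_symm_succ hj,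
    wickNests_decomposeFin_symm_succ hj, wickNests_eq_enclosingPairCount_add hj, ← pow_add]
  ring_nf

end WickSign

section WickExpansion

open Equiv Perm Finset ExteriorAlgebra CliffordAlgebra

variable {Φ : Type*} [NormedAddCommGroup Φ] [InnerProductSpace ℝ Φ] {k : ℕ}

noncomputable def wickTerm (f : Perm (Fin k)) (η : Fin k → Φ) : ExteriorAlgebra ℝ Φ :=
  (wickSign f * wickContractions f η) • wickWedge f η

noncomputable def wickSum (η : Fin k → Φ) : ExteriorAlgebra ℝ Φ :=
  ∑ f ∈ univ.filter (fun f : Perm (Fin k) => f * f = 1), wickTerm f η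

theorem wickTerm_decomposeFin_symm_zero (f : Perm (Fin k)) (η : Fin (k + 1) → Φ) :
    wickTerm (decomposeFin.symm (0, f)) η = ι ℝ (η 0) * wickTerm f (η ∘ Fin.succ) := by
  rw [wickTerm, wickTerm, wickSign_decomposeFin_symm_zero, wickContractions_decomposeFin_symm_zero,
    wickWedge_decomposeFin_symm_zero, Algebra.mul_smul_comm]

theorem contractLeft_wickTerm (f : Perm (Fin k)) (η : Fin (k + 1) → Φ) :
    contractLeft (innerₗ Φ (η 0)) (wickTerm f (η ∘ Fin.succ))
      = ∑ j ∈ univ.filter (fun j => f j = j), wickTerm (decomposeFin.symm (j.succ, f)) η := by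
  rw [wickTerm, map_smul, wickWedge_eq_orderedWedge, contractLeft_orderedWedge, smul_sum]
  refine sum_congr rfl fun j hj => ?_
  have hj : f j = j := (mem_filter.1 hj).2
  rw [wickTerm, wickSign_decomposeFin_symm_succ hj, wickContractions_decomposeFin_symm_succ hj,
    wickWedge_decomposeFin_symm_succ hj, smul_smul]
  congr 1
  simp only [innerₗ_apply_apply, Function.comp_apply]
  ring

theorem wickSum_succ (η : Fin (k + 1) → Φ) :
    wickSum η = ι ℝ (η 0) * wickSum (η ∘ Fin.succ)
      + contractLeft (innerₗ Φ (η 0)) (wickSum (η ∘ Fin.succ)) := by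
  simp only [wickSum, sum_filter]
  rw [← decomposeFin.symm.sum_comp, Fintype.sum_prod_type, Fin.sum_univ_succ, mul_sum, map_sum,
    sum_comm]
  congr 1
  · refine sum_congr rfl fun f _ => ?_
    have hiff : decomposeFin.symm (0, f) * decomposeFin.symm (0, f) = 1 ↔ f * f = 1 := by
      simp only [mul_self_eq_one_iff_involutive, involutive_decomposeFin_symm_zero_iff]
    rw [wickTerm_decomposeFin_symm_zero, mul_ite, mul_zero]
    exact if_congr hiff rfl rfl
  · refine sum_congr rfl fun f _ => ?_
    have hiff (j : Fin k) : decomposeFin.symm (j.succ, f) * decomposeFin.symm (j.succ, f) = 1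
        ↔ f * f = 1 ∧ f j = j := by
      simp only [mul_self_eq_one_iff_involutive, involutive_decomposeFin_symm_succ_iff]
    simp only [hiff, ite_and]
    split_ifs with hf
    · rw [contractLeft_wickTerm, sum_filter]
    · simp

end WickExpansion

theorem wick_theorem_clifford_general
    {Φ : Type*} [NormedAddCommGroup Φ] [InnerProductSpace ℝ Φ]
    (k : ℕ) (η : Fin k → Φ) :
    CliffordAlgebra.equivExterior (innerQuadraticForm Φ)
        (List.ofFn fun i => CliffordAlgebra.ι (innerQuadraticForm Φ) (η i)).prod
      = ∑ f ∈ Finset.univ.filter (fun f : Equiv.Perm (Fin k) => f * f = 1),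
          (wickSign f * wickContractions f η) • wickWedge f η := by
  change _ = wickSum η
  induction k with
  | zero =>
    simp [wickSum, wickTerm, wickSign, wickCrossings, wickNests, wickContractions, wickWedge,
      Finset.filter_singleton]
  | succ k ih =>
    rw [List.ofFn_succ, List.prod_cons, CliffordAlgebra.equivExterior_ι_mul,
      associated_innerQuadraticForm, wickSum_succ, ← ih (η ∘ Fin.succ)]
    rfl

/-- Wick's theorem for Clifford algebras: under the canonical identification of
`Cl(Φ, g)` with `Λ(Φ)`, the Clifford product `η₁ ⋯ η_k` is the sum over all
contraction patterns of the sign times the product of the contractions `g(ηᵢ, ηⱼ)`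
times the wedge product of the uncontracted vectors. -/
theorem wick_theorem_clifford
    {Φ : Type*} [NormedAddCommGroup Φ] [InnerProductSpace ℝ Φ] [FiniteDimensional ℝ Φ]
    (k : ℕ) (η : Fin k → Φ) :
    CliffordAlgebra.equivExterior (innerQuadraticForm Φ)
        (List.ofFn fun i => CliffordAlgebra.ι (innerQuadraticForm Φ) (η i)).prod
      = ∑ f ∈ Finset.univ.filter (fun f : Equiv.Perm (Fin k) => f * f = 1),
          (wickSign f * wickContractions f η) • wickWedge f η :=
  wick_theorem_clifford_general k η
end
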